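/- arXiv:1102.3129 — 3 statements merged into one kernel-verified Lean document; each statement's English description precedes it below -/
import Mathlib

section
/- Let M be a d×d matrix over ℕ that is upper triangular with all diagonal entries at most 1, and let k be the number of ones occurring along the diagonal of M. Then every entry of Mⁿ is O(n^{k-1}); that is, there exists a constant c such that for all n ≥ 1 and all indices i, j, (Mⁿ)_{i,j} ≤ c · n^{k-1}. -/
open Matrix

namespace Stmt2Aux

variable {d : ℕ} (M : Matrix (Fin d) (Fin d) ℕ)

/-- number of diagonal ones with index in `[i, j]`. -/
def cnt (i j : Fin d) : ℕ :=
  (Finset.univ.filter (fun t : Fin d => i ≤ t ∧ t ≤ j ∧ M t t = 1)).card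

lemma upper (htri : ∀ i j : Fin d, j < i → M i j = 0) :
    ∀ n : ℕ, ∀ i j : Fin d, j < i → (M ^ n) i j = 0 := by
  intro n
  induction n with
  | zero =>
    intro i j hij
    simpa using Matrix.one_apply_ne (ne_of_gt hij)
  | succ n ih =>
    intro i j hij
    rw [pow_succ', Matrix.mul_apply]
    apply Finset.sum_eq_zero
    intro l _
    rcases lt_or_ge l i with h | h
    · rw [htri i l h, zero_mul]
    · rw [ih l j (lt_of_lt_of_le hij h), mul_zero]

lemma crude (B : ℕ) (hB : ∀ i j, M i j ≤ B) :
    ∀ n : ℕ, ∀ i j : Fin d, (M ^ n) i j ≤ (d * B + 1) ^ n := by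
  intro n
  induction n with
  | zero =>
    intro i j
    by_cases h : i = j <;> simp [Matrix.one_apply, h]
  | succ n ih =>
    intro i j
    rw [pow_succ', Matrix.mul_apply]
    calc ∑ l, M i l * (M ^ n) l j
        ≤ ∑ _l : Fin d, B * (d * B + 1) ^ n := by
          apply Finset.sum_le_sum
          intro l _
          exact Nat.mul_le_mul (hB i l) (ih l j)
      _ = d * B * (d * B + 1) ^ n := by
          rw [Finset.sum_const, Finset.card_univ, Fintype.card_fin, smul_eq_mul, mul_assoc]
      _ ≤ (d * B + 1) * (d * B + 1) ^ n :=
          Nat.mul_le_mul_right _ (Nat.le_succ _)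
      _ = (d * B + 1) ^ (n + 1) := (pow_succ' _ _).symm

lemma zcnt (htri : ∀ i j : Fin d, j < i → M i j = 0)
    (hdiag : ∀ i : Fin d, M i i ≤ 1) :
    ∀ n : ℕ, ∀ i j : Fin d, cnt M i j = 0 → j.val - i.val < n → (M ^ n) i j = 0 := by
  intro n
  induction n with
  | zero => intro i j _ h; omega
  | succ n ih =>
    intro i j hc hlt
    rcases lt_or_ge j i with hji | hij
    · exact upper M htri _ i j hji
    rw [pow_succ', Matrix.mul_apply]
    apply Finset.sum_eq_zero
    intro l _
    rcases lt_or_ge l i with h | h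
    · rw [htri i l h, zero_mul]
    rcases eq_or_lt_of_le h with rfl | hil
    · -- l = i : the diagonal entry must be 0
      have h1 : M i i ≠ 1 := by
        intro h1
        have hmem : i ∈ Finset.univ.filter (fun t : Fin d => i ≤ t ∧ t ≤ j ∧ M t t = 1) := by
          simp [hij, h1]
        have h2 := Finset.card_eq_zero.mp hc
        rw [h2] at hmem
        exact absurd hmem (Finset.notMem_empty i)
      have h0 : M i i = 0 := by have := hdiag i; omega
      rw [h0, zero_mul]
    · rcases lt_or_ge j l with hjl | hlj
      · rw [upper M htri n l j hjl, mul_zero]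
      · have hsub : (Finset.univ.filter (fun t : Fin d => l ≤ t ∧ t ≤ j ∧ M t t = 1)) ⊆
            (Finset.univ.filter (fun t : Fin d => i ≤ t ∧ t ≤ j ∧ M t t = 1)) := by
          intro t ht
          simp only [Finset.mem_filter, Finset.mem_univ, true_and] at ht ⊢
          exact ⟨le_trans (le_of_lt hil) ht.1, ht.2.1, ht.2.2⟩
        have hc' : cnt M l j = 0 := by
          have := Finset.card_le_card hsub
          unfold cnt at hc ⊢
          omega
        have hlt' : j.val - l.val < n := by
          have h1 : i.val < l.val := hil
          have h2 : l.val ≤ j.val := hlj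
          omega
        rw [ih l j hc' hlt', mul_zero]

lemma main (htri : ∀ i j : Fin d, j < i → M i j = 0)
    (hdiag : ∀ i : Fin d, M i i ≤ 1) (hd : 1 ≤ d)
    (B : ℕ) (hB : ∀ i j, M i j ≤ B) :
    ∀ m : ℕ, ∃ C : ℕ, 1 ≤ C ∧ ∀ i : Fin d, d - i.val ≤ m →
      ∀ n : ℕ, 1 ≤ n → ∀ j : Fin d, (M ^ n) i j ≤ C * n ^ (cnt M i j - 1) := by
  intro m
  induction m with
  | zero =>
    refine ⟨1, le_refl 1, fun i hi => ?_⟩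
    exact absurd hi (by have := i.isLt; omega)
  | succ m ihm =>
    obtain ⟨C, hC1, hC⟩ := ihm
    set A : ℕ := d * B + 1 with hA
    have hA1 : 1 ≤ A := by omega
    have hAd : 1 ≤ A ^ d := Nat.one_le_pow d A (by omega)
    refine ⟨A ^ d + d * B * C + C, by omega, fun i hi n hn j => ?_⟩
    set C' : ℕ := A ^ d + d * B * C + C with hC'
    -- uniform IH for rows strictly below i
    have hIH : ∀ l : Fin d, i < l → ∀ n : ℕ, 1 ≤ n → ∀ j : Fin d,
        (M ^ n) l j ≤ C * n ^ (cnt M l j - 1) := by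
      intro l hl
      apply hC
      have h1 : i.val < l.val := hl
      have h2 : l.val < d := l.isLt
      omega
    have hAd' : A ≤ A ^ d := Nat.le_self_pow (by omega) A
    have hBA : B ≤ A := by
      have : B ≤ d * B := Nat.le_mul_of_pos_left B hd
      omega
    have hAC' : A ^ d ≤ C' := Nat.le_add_right _ _ |>.trans (Nat.le_add_right _ _)
    have hBC' : B ≤ C' := hBA.trans (hAd'.trans hAC')
    have hdbc : d * B * C ≤ C' := (Nat.le_add_left _ _).trans (Nat.le_add_right _ _) |>.trans (le_of_eq rfl)
    rcases lt_or_ge j i with hji | hij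
    · rw [upper M htri n i j hji]; exact Nat.zero_le _
    have hcm : ∀ l : Fin d, i < l → cnt M l j ≤ cnt M i j := by
      intro l hl
      apply Finset.card_le_card
      intro t ht
      simp only [Finset.mem_filter, Finset.mem_univ, true_and] at ht ⊢
      exact ⟨(le_of_lt hl).trans ht.1, ht.2.1, ht.2.2⟩
    rcases Nat.lt_or_ge (M i i) 1 with hMi | hMi1
    · -- case M i i = 0
      have hMi0 : M i i = 0 := by omega
      obtain ⟨n', rfl⟩ : ∃ n', n = n' + 1 := ⟨n - 1, by omega⟩
      rcases Nat.eq_zero_or_pos n' with rfl | hn'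
      · rw [pow_one]
        calc M i j ≤ B := hB i j
          _ ≤ C' * 1 ^ (cnt M i j - 1) := by simpa using hBC'
      · rw [pow_succ', Matrix.mul_apply]
        have hterm : ∀ l : Fin d, M i l * (M ^ n') l j ≤ B * (C * n' ^ (cnt M i j - 1)) := by
          intro l
          rcases lt_trichotomy l i with h | rfl | h
          · rw [htri i l h, zero_mul]; exact Nat.zero_le _
          · rw [hMi0, zero_mul]; exact Nat.zero_le _
          · calc M i l * (M ^ n') l j ≤ B * (C * n' ^ (cnt M l j - 1)) :=
                Nat.mul_le_mul (hB i l) (hIH l h n' hn' j)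
              _ ≤ B * (C * n' ^ (cnt M i j - 1)) := by
                apply Nat.mul_le_mul le_rfl
                apply Nat.mul_le_mul le_rfl
                exact Nat.pow_le_pow_right hn' (by have := hcm l h; omega)
        calc ∑ l, M i l * (M ^ n') l j
            ≤ ∑ _l : Fin d, B * (C * n' ^ (cnt M i j - 1)) :=
              Finset.sum_le_sum (fun l _ => hterm l)
          _ = d * B * C * n' ^ (cnt M i j - 1) := by
              rw [Finset.sum_const, Finset.card_univ, Fintype.card_fin, smul_eq_mul]; ring
          _ ≤ C' * n' ^ (cnt M i j - 1) := Nat.mul_le_mul hdbc le_rfl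
          _ ≤ C' * (n' + 1) ^ (cnt M i j - 1) :=
              Nat.mul_le_mul le_rfl (Nat.pow_le_pow_left (by omega) _)
    · -- case M i i = 1
      have hMi : M i i = 1 := le_antisymm (hdiag i) hMi1
      have himem : i ∈ Finset.univ.filter (fun t : Fin d => i ≤ t ∧ t ≤ j ∧ M t t = 1) := by
        simp [hij, hMi]
      have hcnt1 : 1 ≤ cnt M i j := Finset.card_pos.mpr ⟨i, himem⟩
      have hcm1 : ∀ l : Fin d, i < l → cnt M l j + 1 ≤ cnt M i j := by
        intro l hl
        have hsub : (Finset.univ.filter (fun t : Fin d => l ≤ t ∧ t ≤ j ∧ M t t = 1)) ⊆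
            (Finset.univ.filter (fun t : Fin d => i ≤ t ∧ t ≤ j ∧ M t t = 1)).erase i := by
          intro t ht
          simp only [Finset.mem_filter, Finset.mem_univ, true_and, Finset.mem_erase] at ht ⊢
          refine ⟨?_, (le_of_lt hl).trans ht.1, ht.2.1, ht.2.2⟩
          have : i < t := lt_of_lt_of_le hl ht.1
          exact (ne_of_gt this)
        have h1 := Finset.card_le_card hsub
        rw [Finset.card_erase_of_mem himem] at h1
        have := hcnt1
        unfold cnt at *
        omega
      set e : ℕ := cnt M i j - 1 with he
      rcases Nat.eq_zero_or_pos e with he0 | he1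
      · -- cnt M i j = 1 : constant bound via nilpotency below row i
        have hz : ∀ l : Fin d, i < l → ∀ n : ℕ, d ≤ n → (M ^ n) l j = 0 := by
          intro l hl n hdn
          apply zcnt M htri hdiag
          · have := hcm1 l hl; omega
          · have := j.isLt; omega
        have key : ∀ t : ℕ, (M ^ (d + t)) i j ≤ A ^ d := by
          intro t
          induction t with
          | zero => simpa using crude M B hB d i j
          | succ t iht =>
            have heq : (M ^ (d + (t + 1))) i j = (M ^ (d + t)) i j := by
              have h4 : d + (t + 1) = (d + t) + 1 := by omega
              rw [h4, pow_succ', Matrix.mul_apply]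
              rw [Finset.sum_eq_single i]
              · rw [hMi, one_mul]
              · intro l _ hl
                rcases lt_or_gt_of_ne hl with h | h
                · rw [htri i l h, zero_mul]
                · rw [hz l h (d + t) (by omega), mul_zero]
              · intro h; exact absurd (Finset.mem_univ i) h
            rw [heq]; exact iht
        rw [he0, pow_zero, mul_one]
        rcases Nat.lt_or_ge n d with hnd | hnd
        · calc (M ^ n) i j ≤ A ^ n := crude M B hB n i j
            _ ≤ A ^ d := Nat.pow_le_pow_right hA1 (by omega)
            _ ≤ C' := hAC'
        · obtain ⟨t, rfl⟩ : ∃ t, n = d + t := ⟨n - d, by omega⟩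
          exact (key t).trans hAC'
      · -- e ≥ 1 : polynomial induction on n
        have key : ∀ n : ℕ, 1 ≤ n → (M ^ n) i j ≤ C' * n ^ e := by
          intro n hn
          induction n, hn using Nat.le_induction with
          | base =>
            rw [pow_one]
            calc M i j ≤ B := hB i j
              _ ≤ C' * 1 ^ e := by simpa using hBC'
          | succ n hn ihn =>
            rw [pow_succ', Matrix.mul_apply]
            rw [Finset.sum_eq_add_sum_sdiff_singleton_of_mem (Finset.mem_univ i)]
            have h1 : M i i * (M ^ n) i j ≤ C' * n ^ e := by rw [hMi, one_mul]; exact ihn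
            have h2 : ∑ l ∈ Finset.univ \ {i}, M i l * (M ^ n) l j ≤ C' * n ^ (e - 1) := by
              calc ∑ l ∈ Finset.univ \ {i}, M i l * (M ^ n) l j
                  ≤ ∑ _l ∈ Finset.univ \ {i}, B * (C * n ^ (e - 1)) := by
                    apply Finset.sum_le_sum
                    intro l hlmem
                    have hlne : l ≠ i := by
                      simp only [Finset.mem_sdiff, Finset.mem_singleton] at hlmem
                      exact hlmem.2
                    rcases lt_or_gt_of_ne hlne with h | h
                    · rw [htri i l h, zero_mul]; exact Nat.zero_le _
                    · calc M i l * (M ^ n) l j ≤ B * (C * n ^ (cnt M l j - 1)) :=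
                          Nat.mul_le_mul (hB i l) (hIH l h n hn j)
                        _ ≤ B * (C * n ^ (e - 1)) := by
                          apply Nat.mul_le_mul le_rfl
                          apply Nat.mul_le_mul le_rfl
                          apply Nat.pow_le_pow_right hn
                          have := hcm1 l h
                          omega
                _ ≤ d * (B * (C * n ^ (e - 1))) := by
                    rw [Finset.sum_const, smul_eq_mul]
                    apply Nat.mul_le_mul _ le_rfl
                    calc (Finset.univ \ {i}).card ≤ (Finset.univ : Finset (Fin d)).card :=
                        Finset.card_le_card (Finset.sdiff_subset)
                      _ = d := by simp
                _ = d * B * C * n ^ (e - 1) := by ring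
                _ ≤ C' * n ^ (e - 1) := Nat.mul_le_mul hdbc le_rfl
            have hpow : n ^ e + n ^ (e - 1) ≤ (n + 1) ^ e := by
              have h3 : e - 1 + 1 = e := by omega
              calc n ^ e + n ^ (e - 1) = n ^ (e - 1) * n + n ^ (e - 1) := by
                    rw [← pow_succ, h3]
                _ = n ^ (e - 1) * (n + 1) := by ring
                _ ≤ (n + 1) ^ (e - 1) * (n + 1) :=
                    Nat.mul_le_mul (Nat.pow_le_pow_left (by omega) _) le_rfl
                _ = (n + 1) ^ e := by rw [← pow_succ, h3]
            calc M i i * (M ^ n) i j + ∑ l ∈ Finset.univ \ {i}, M i l * (M ^ n) l j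
                ≤ C' * n ^ e + C' * n ^ (e - 1) := Nat.add_le_add h1 h2
              _ = C' * (n ^ e + n ^ (e - 1)) := by ring
              _ ≤ C' * (n + 1) ^ e := Nat.mul_le_mul le_rfl hpow
        exact key n hn

end Stmt2Aux

open Stmt2Aux

/-- entries of powers of an upper triangular complexity matrix
with `k` ones on the diagonal grow as `O(n^(k-1))`. -/
theorem stmt2 {d : ℕ} (M : Matrix (Fin d) (Fin d) ℕ)
    (htri : ∀ i j : Fin d, j < i → M i j = 0)
    (hdiag : ∀ i : Fin d, M i i ≤ 1)
    (k : ℕ) (hk : k = (Finset.univ.filter (fun i : Fin d => M i i = 1)).card) :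
    ∃ c : ℕ, ∀ n : ℕ, 1 ≤ n → ∀ i j : Fin d, (M ^ n) i j ≤ c * n ^ (k - 1) := by
  rcases Nat.eq_zero_or_pos d with rfl | hd
  · exact ⟨0, fun n _ i => i.elim0⟩
  set B : ℕ := (Finset.univ : Finset (Fin d × Fin d)).sup (fun p => M p.1 p.2) with hBdef
  have hB : ∀ i j : Fin d, M i j ≤ B := fun i j =>
    Finset.le_sup (f := fun p : Fin d × Fin d => M p.1 p.2) (Finset.mem_univ (i, j))
  obtain ⟨C, _hC1, hC⟩ := main M htri hdiag hd B hB d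
  refine ⟨C, fun n hn i j => ?_⟩
  have h1 := hC i (Nat.sub_le d i.val) n hn j
  refine h1.trans (Nat.mul_le_mul le_rfl (Nat.pow_le_pow_right hn ?_))
  have h2 : cnt M i j ≤ k := by
    rw [hk]
    apply Finset.card_le_card
    intro t ht
    simp only [Finset.mem_filter, Finset.mem_univ, true_and] at ht ⊢
    exact ht.2.2
  omega
end

section
/- Let →_R and →_S be binary relations on a set A, w : A → ℕ with: (i) s →_S t implies w(s) ≥ w(t) + 1, (ii) s →_R t implies w(t) ≤ w(s) + Δ for a fixed Δ ∈ ℕ. Suppose →_{R/S} := →_S* ∘ →_R ∘ →_S* is well-founded and finitely branching, and dh(s, →_{R/S}) = m. If moreover →_S is well-founded and finitely branching, then dh(s, →_R ∪ →_S) ≤ (1 + Δ)·m + w(s). -/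
/-- The relative step relation `→_{R/S} = →_S* ∘ →_R ∘ →_S*`. -/
def RelStep {A : Type*} (R S : A → A → Prop) (a b : A) : Prop :=
  ∃ x y, Relation.ReflTransGen S a x ∧ R x y ∧ Relation.ReflTransGen S y b

/-- `HasChain r t n`: there is an `r`-chain of length `n` starting at `t`. -/
def HasChain {A : Type*} (r : A → A → Prop) (t : A) (n : ℕ) : Prop :=
  ∃ f : ℕ → A, f 0 = t ∧ ∀ i < n, r (f i) (f (i + 1))

lemma hchain_cons {A : Type*} {r : A → A → Prop} {s t : A} {j : ℕ}
    (h : r s t) (hc : HasChain r t j) : HasChain r s (j + 1) := by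
  obtain ⟨g, hg0, hg⟩ := hc
  refine ⟨fun i => if i = 0 then s else g (i - 1), by simp, ?_⟩
  intro i hi
  cases i with
  | zero => simpa [hg0] using h
  | succ k => simpa using hg k (by omega)

lemma hchain_tail {A : Type*} {r : A → A → Prop} {s : A} {n : ℕ}
    (hc : HasChain r s (n + 1)) : ∃ t, r s t ∧ HasChain r t n := by
  obtain ⟨f, hf0, hf⟩ := hc
  exact ⟨f 1, hf0 ▸ hf 0 (by omega), fun i => f (i + 1), rfl,
    fun i hi => hf (i + 1) (by omega)⟩

lemma hchain_S_prepend {A : Type*} {R S : A → A → Prop} {s t : A} {j : ℕ}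
    (h : S s t) (hc : HasChain (RelStep R S) t j) : HasChain (RelStep R S) s j := by
  cases j with
  | zero => exact ⟨fun _ => s, rfl, by simp⟩
  | succ k =>
    obtain ⟨g, hg0, hg⟩ := hc
    refine ⟨fun i => if i = 0 then s else g i, by simp, ?_⟩
    intro i hi
    cases i with
    | zero =>
      obtain ⟨x, y, h1, h2, h3⟩ := hg 0 (by omega)
      refine ⟨x, y, ?_, h2, by simpa using h3⟩
      simp only [if_pos rfl]
      exact Relation.ReflTransGen.head h (hg0 ▸ h1)
    | succ k => simpa using hg (k + 1) (by omega)

/-- weight gap principle. If `w` decreases strictly along `→_S`,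
increases by at most `Δ` along `→_R`, `→_{R/S}` is well-founded and finitely
branching with `dh(s, →_{R/S}) = m`, and `→_S` is well-founded and finitely
branching, then `dh(s, →_R ∪ →_S) ≤ (1 + Δ)·m + w s`. -/
theorem stmt5 {A : Type*} (R S : A → A → Prop) (w : A → ℕ) (Δ : ℕ)
    (hS : ∀ s t, S s t → w t + 1 ≤ w s)
    (hR : ∀ s t, R s t → w t ≤ w s + Δ)
    (hwfRS : WellFounded (fun a b => RelStep R S b a))
    (hfbRS : ∀ a : A, {b | RelStep R S a b}.Finite)
    (hwfS : WellFounded (fun a b => S b a))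
    (hfbS : ∀ a : A, {b | S a b}.Finite)
    (s : A) (m : ℕ)
    (hdh₁ : HasChain (RelStep R S) s m)
    (hdh₂ : ∀ n, HasChain (RelStep R S) s n → n ≤ m) :
    ∀ n, HasChain (fun a b => R a b ∨ S a b) s n → n ≤ (1 + Δ) * m + w s := by
  clear hdh₁ hwfRS hfbRS hwfS hfbS
  intro n
  induction n generalizing s m with
  | zero => intro _; omega
  | succ k ih =>
    intro hc
    obtain ⟨t, hst, hct⟩ := hchain_tail hc
    rcases hst with hst | hst
    · -- R-step
      have hrel : RelStep R S s t := ⟨s, t, .refl, hst, .refl⟩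
      have hm1 : 1 ≤ m := hdh₂ 1 (hchain_cons hrel ⟨fun _ => t, rfl, by simp⟩)
      obtain ⟨m', rfl⟩ : ∃ m', m = m' + 1 := ⟨m - 1, by omega⟩
      have hb : ∀ j, HasChain (RelStep R S) t j → j ≤ m' := fun j hj => by
        have := hdh₂ (j + 1) (hchain_cons hrel hj)
        omega
      have := ih t m' hb hct
      have := hR s t hst
      have h1 : (1 + Δ) * (m' + 1) = (1 + Δ) * m' + (1 + Δ) := by ring
      omega
    · -- S-step
      have hb : ∀ j, HasChain (RelStep R S) t j → j ≤ m := fun j hj =>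
        hdh₂ j (hchain_S_prepend hst hj)
      have := ih t m hb hct
      have := hS s t hst
      omega
end

section
/- Let R be a TRS, μ a replacement map, s and t terms, σ a substitution. If sσ is a μ-replacing term and μ-cap_{μ,s}(t) = t (the μ-cap function leaves t unchanged), then tσ is an R-normal form. -/
/-- First-order terms over a signature `F` with ℕ-indexed variables. -/
inductive Term (F : Type) : Type
  | var : ℕ → Term F
  | fn : F → List (Term F) → Term F

/-- `μ`-replacing positions of a term, for a replacement map `μ`. -/
inductive PosMu {F : Type} (μ : F → Set ℕ) : Term F → List ℕ → Prop
  | nil (t : Term F) : PosMu μ t []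
  | cons (f : F) (ts : List (Term F)) (i : ℕ) (u : Term F) (p : List ℕ) :
      i ∈ μ f → ts[i]? = some u → PosMu μ u p → PosMu μ (Term.fn f ts) (i :: p)

/-- `SubtermAt t p u`: the subterm of `t` at position `p` is `u`. -/
inductive SubtermAt {F : Type} : Term F → List ℕ → Term F → Prop
  | refl (t : Term F) : SubtermAt t [] t
  | step (f : F) (ts : List (Term F)) (i : ℕ) (u : Term F) (p : List ℕ) (v : Term F) :
      ts[i]? = some u → SubtermAt u p v → SubtermAt (Term.fn f ts) (i :: p) v

/-- Application of a substitution to a term. -/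
def subst {F : Type} (σ : ℕ → Term F) : Term F → Term F
  | .var v => σ v
  | .fn f ts => .fn f (ts.attach.map fun u => subst σ u.1)
  decreasing_by
    have := List.sizeOf_lt_of_mem u.2
    simp only [Term.fn.sizeOf_spec] at *
    omega

/-- `RewriteAt R s p t`: a rewrite step from `s` to `t` using a rule of `R` at
position `p`. -/
inductive RewriteAt {F : Type} (R : Term F → Term F → Prop) :
    Term F → List ℕ → Term F → Prop
  | root (l r : Term F) (σ : ℕ → Term F) :
      R l r → RewriteAt R (subst σ l) [] (subst σ r)
  | congr (f : F) (ts : List (Term F)) (i : ℕ) (u v : Term F) (p : List ℕ) :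
      ts[i]? = some u → RewriteAt R u p v →
      RewriteAt R (Term.fn f ts) (i :: p) (Term.fn f (ts.set i v))

/-- `t` is an `R`-normal form: no redex. -/
def NF {F : Type} (R : Term F → Term F → Prop) (t : Term F) : Prop :=
  ¬ ∃ p u, RewriteAt R t p u

/-- `t` is a `μ`-replacing term: every reducible subterm of `t` occurs at a
`μ`-replacing position. -/
def MuTerm {F : Type} (μ : F → Set ℕ) (R : Term F → Term F → Prop) (t : Term F) : Prop :=
  ∀ p u, SubtermAt t p u → ¬ NF R u → PosMu μ t p

/-- Two terms are unifiable (with variables renamed apart, hence two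
substitutions). -/
def Unifiable {F : Type} (u l : Term F) : Prop :=
  ∃ σ τ : ℕ → Term F, subst σ u = subst τ l

/-- `CapFixed R μ s t` holds exactly when the μ-cap function `Cap_{μ,s}` leaves
`t` unchanged: either `t` occurs at a non-μ-replacing position of `s`, or
`t = f(t₁,…,tₙ)` where each `tᵢ` is left unchanged and `f(t₁,…,tₙ)` unifies with
no left-hand side of `R` (otherwise the result is a fresh variable, hence ≠ t). -/
inductive CapFixed {F : Type} (R : Term F → Term F → Prop) (μ : F → Set ℕ)
    (s : Term F) : Term F → Prop
  | nonrep (t : Term F) (p : List ℕ) :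
      SubtermAt s p t → ¬ PosMu μ s p → CapFixed R μ s t
  | fn (f : F) (ts : List (Term F)) :
      (∀ u ∈ ts, CapFixed R μ s u) →
      (∀ l r, R l r → ¬ Unifiable (Term.fn f ts) l) →
      CapFixed R μ s (Term.fn f ts)

/-! Induct on the derivation of `Cap_{μ,s}(t) = t`. A subterm kept because it occurs at a
non-μ-replacing position `p` of `s` has its σ-instance at `p` in `sσ`, and `p` is still
non-μ-replacing there; as `sσ` is μ-replacing, that instance is a normal form. At a kept function
symbol, a root redex of `f(t₁,…,tₙ)σ` would unify `f(t₁,…,tₙ)` with a left-hand side, and redexes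
below the root are excluded by induction. -/

section

variable {F : Type}

@[simp]
theorem subst_fn (σ : ℕ → Term F) (f : F) (ts : List (Term F)) :
    subst σ (Term.fn f ts) = Term.fn f (ts.map (subst σ)) := by
  rw [subst]
  congr 1
  simp [List.attach, List.attachWith, List.map_pmap]

theorem SubtermAt.subst (σ : ℕ → Term F) {s t : Term F} {p : List ℕ} (h : SubtermAt s p t) :
    SubtermAt (subst σ s) p (subst σ t) := by
  induction h with
  | refl => exact .refl _
  | step f ts i u p v hget _ ih =>
    rw [subst_fn]
    exact .step f _ i _ p _ (by rw [List.getElem?_map, hget]; rfl) ih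

theorem PosMu.of_subst {μ : F → Set ℕ} (σ : ℕ → Term F) {s t : Term F} {p : List ℕ}
    (hst : SubtermAt s p t) (hp : PosMu μ (subst σ s) p) : PosMu μ s p := by
  induction hst with
  | refl => exact .nil _
  | step f ts i u p v hget _ ih =>
    rw [subst_fn] at hp
    obtain _ | ⟨_, _, _, _, _, hi, hget', hw⟩ := hp
    rw [List.getElem?_map, hget, Option.map_some, Option.some_inj] at hget'
    subst hget'
    exact .cons f ts i u p hi hget (ih hw)

theorem NF.subst_of_not_posMu {R : Term F → Term F → Prop} {μ : F → Set ℕ}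
    {σ : ℕ → Term F} {s t : Term F} {p : List ℕ} (hs : MuTerm μ R (subst σ s))
    (hst : SubtermAt s p t) (hp : ¬ PosMu μ s p) : NF R (subst σ t) := by
  by_contra hred
  exact hp (.of_subst σ hst (hs p _ (hst.subst σ) hred))

theorem NF.fn {R : Term F → Term F → Prop} {f : F} {ts : List (Term F)}
    (hroot : ∀ l r (τ : ℕ → Term F), R l r → subst τ l ≠ Term.fn f ts)
    (hargs : ∀ u ∈ ts, NF R u) : NF R (Term.fn f ts) := by
  rintro ⟨p, v, hr⟩
  generalize hW : Term.fn f ts = W at hr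
  cases hr with
  | root l r τ hlr => exact hroot l r τ hlr hW.symm
  | congr _ _ i u _ _ hget hstep =>
    cases hW
    exact hargs u (List.mem_of_getElem? hget) ⟨_, _, hstep⟩

end

/-- if `sσ` is a μ-replacing term and `Cap_{μ,s}(t) = t`, then
`tσ` is an `R`-normal form. -/
theorem stmt10 {F : Type} (R : Term F → Term F → Prop) (μ : F → Set ℕ)
    (s t : Term F) (σ : ℕ → Term F)
    (hs : MuTerm μ R (subst σ s)) (hcap : CapFixed R μ s t) :
    NF R (subst σ t) := by
  induction hcap with
  | nonrep t p hst hp => exact .subst_of_not_posMu hs hst hp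
  | fn f ts _ hnu ih =>
    rw [subst_fn]
    refine .fn (fun l r τ hlr heq => hnu l r hlr ⟨σ, τ, by rw [subst_fn, heq]⟩) ?_
    simpa only [List.forall_mem_map] using ih
end
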